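/- Let (M,d) be a nonempty compact geodesic metric space, and let ε > 0 and v > 0. Let Y be a compact topological space and Φ : Y × [0,∞) → M a continuous map such that for every k ∈ Y the curve t ↦ Φ(k,t) satisfies (GRC) for ε. Then there exist T > 0 and a map x : [0,T] → M that is Lipschitz with constant at most v (i.e. d(x(s),x(t)) ≤ v·|s−t| for all s,t ∈ [0,T]) such that for every k ∈ Y there exists t ∈ [0,T] with d(Φ(k,t), x(t)) < ε; that is, the moving open ball B(x(t),ε) catches every trajectory of the family within time T. -/

import Mathlib

open MeasureTheory Filter

/-- A map `y : [0,∞) → M` (modeled on `ℝ`) satisfies the Geodesic Recurrence Condition (GRC)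
for `ε > 0` if there are a point `p ∈ M` and a radius `0 < r < ε` such that
`liminf_{T→∞} (1/T)·λ({t ∈ [0,T] : d(y t, p) < r}) > 0`. -/
def SatisfiesGRC {M : Type*} [MetricSpace M] (y : ℝ → M) (ε : ℝ) : Prop :=
  ∃ p : M, ∃ r : ℝ, 0 < r ∧ r < ε ∧
    0 < Filter.liminf
      (fun T : ℝ => (volume {t ∈ Set.Icc (0 : ℝ) T | dist (y t) p < r}).toReal / T) Filter.atTop

/-- A metric space is geodesic if any two points are joined by an isometric path. -/
def IsGeodesicSpace (M : Type*) [MetricSpace M] : Prop :=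
  ∀ p q : M, ∃ γ : ℝ → M, γ 0 = p ∧ γ (dist p q) = q ∧
    ∀ s ∈ Set.Icc (0 : ℝ) (dist p q), ∀ t ∈ Set.Icc (0 : ℝ) (dist p q),
      dist (γ s) (γ t) = |s - t|

private lemma clamp_lip (d u u' : ℝ) :
    |max 0 (min u d) - max 0 (min u' d)| ≤ |u - u'| := by
  have h1 : |max 0 (min u d) - max 0 (min u' d)| ≤ |min u d - min u' d| := by
    simpa [max_comm] using abs_max_sub_max_le_abs (min u d) (min u' d) 0
  have h2 : |min u d - min u' d| ≤ max |u - u'| |d - d| := abs_min_sub_min_le_max u d u' d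
  simpa using h1.trans h2

/-- Main theorem (abstract form): if every trajectory of the continuous family `Φ` satisfies
(GRC) for `ε`, then there is a finite time `T` and a path of speed at most `v` whose moving
`ε`-ball catches every trajectory within time `T`. -/
theorem statement_0 {M : Type*} [MetricSpace M] [CompactSpace M] [Nonempty M]
    (hM : IsGeodesicSpace M) (ε v : ℝ) (hε : 0 < ε) (hv : 0 < v)
    {Y : Type*} [TopologicalSpace Y] [CompactSpace Y]
    (Φ : Y × ℝ → M) (hΦ : ContinuousOn Φ (Set.univ ×ˢ Set.Ici (0 : ℝ)))
    (hGRC : ∀ k : Y, SatisfiesGRC (fun t => Φ (k, t)) ε) :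
    ∃ T > (0 : ℝ), ∃ x : ℝ → M,
      (∀ s ∈ Set.Icc (0 : ℝ) T, ∀ t ∈ Set.Icc (0 : ℝ) T, dist (x s) (x t) ≤ v * |s - t|) ∧
      ∀ k : Y, ∃ t ∈ Set.Icc (0 : ℝ) T, dist (Φ (k, t)) (x t) < ε := by
  classical
  -- a bound on the diameter of M
  obtain ⟨D, hD_pos, hD⟩ : ∃ D : ℝ, 0 < D ∧ ∀ p q : M, dist p q ≤ D := by
    obtain ⟨C, hC⟩ := Metric.isBounded_iff.1 (isCompact_univ (X := M)).isBounded
    exact ⟨max C 1, lt_of_lt_of_le one_pos (le_max_right _ _),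
      fun p q => le_trans (hC trivial trivial) (le_max_left _ _)⟩
  set τ : ℝ := D / v with hτdef
  have hτ : 0 < τ := div_pos hD_pos hv
  have hvτ : v * τ = D := by rw [hτdef]; field_simp [hv.ne']
  -- a dense sequence in M
  obtain ⟨q, hq⟩ := TopologicalSpace.exists_dense_seq M
  -- chosen geodesics, clamped
  choose γ hγ0 hγd hγiso using hM
  set g : M → M → ℝ → M := fun p p' u => γ p p' (max 0 (min u (dist p p'))) with hgdef
  have hg_left : ∀ p p' (u : ℝ), u ≤ 0 → g p p' u = p := by
    intro p p' u hu
    have : max 0 (min u (dist p p')) = 0 := by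
      have : min u (dist p p') ≤ 0 := le_trans (min_le_left _ _) hu
      simp [max_eq_left this]
    rw [hgdef]; simp only; rw [this, hγ0]
  have hg_right : ∀ p p' (u : ℝ), dist p p' ≤ u → g p p' u = p' := by
    intro p p' u hu
    have h1 : min u (dist p p') = dist p p' := min_eq_right hu
    have h2 : max 0 (dist p p') = dist p p' := max_eq_right dist_nonneg
    rw [hgdef]; simp only; rw [h1, h2, hγd]
  have hg_lip : ∀ p p' (u u' : ℝ), dist (g p p' u) (g p p' u') ≤ |u - u'| := by
    intro p p' u u'
    have hmem : ∀ w : ℝ, max 0 (min w (dist p p')) ∈ Set.Icc 0 (dist p p') := by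
      intro w
      refine ⟨le_max_left _ _, ?_⟩
      have : min w (dist p p') ≤ dist p p' := min_le_right _ _
      exact max_le dist_nonneg this
    rw [hgdef]; simp only
    rw [hγiso p p' _ (hmem u) _ (hmem u')]
    exact clamp_lip _ _ _
  -- enumeration hitting every pair infinitely often
  set e : ℕ → ℕ × ℕ := fun s => Nat.unpair (Nat.unpair s).1 with hedef
  have he : ∀ j l m : ℕ, e (Nat.pair (Nat.pair j l) m) = (j, l) := by
    intro j l m; simp [hedef]
  -- stage start times
  set a : ℕ → ℝ := fun n => Nat.rec (0 : ℝ) (fun s as => ((e s).2 + 1) * (as + τ) + 1) n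
    with hadef
  have ha0 : a 0 = 0 := rfl
  have haS : ∀ s, a (s + 1) = ((e s).2 + 1) * (a s + τ) + 1 := fun s => rfl
  have ha_nonneg : ∀ s, 0 ≤ a s := by
    intro s
    induction s with
    | zero => simp [ha0]
    | succ n ih =>
      rw [haS]
      have h1 : (0 : ℝ) ≤ ((e n).2 + 1 : ℝ) := by positivity
      nlinarith [hτ.le]
  have ha_step : ∀ s, a s + τ + 1 ≤ a (s + 1) := by
    intro s
    rw [haS]
    have h1 : (1 : ℝ) ≤ ((e s).2 + 1 : ℝ) := by
      have := Nat.cast_nonneg (α := ℝ) (e s).2; linarith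
    nlinarith [ha_nonneg s, hτ.le]
  have ha_mono : Monotone a := by
    apply monotone_nat_of_le_succ
    intro n; linarith [ha_step n, hτ.le]
  have ha_ge : ∀ s : ℕ, (s : ℝ) ≤ a s := by
    intro s
    induction s with
    | zero => simp [ha0]
    | succ n ih => push_cast; linarith [ha_step n, hτ.le]
  -- path data
  set P : ℕ → M := fun s => q (e s).1 with hPdef
  set prev : ℕ → M := fun s => P (s - 1) with hprevdef
  set stage : ℝ → ℕ := fun t => Nat.findGreatest (fun s => a s ≤ t) (⌈t⌉₊ + 1) with hstagedef
  have hstage1 : ∀ t : ℝ, 0 ≤ t → a (stage t) ≤ t := by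
    intro t ht
    exact Nat.findGreatest_spec (P := fun s => a s ≤ t) (Nat.zero_le _)
      (show a 0 ≤ t from ha0.trans_le ht)
  have hstage2 : ∀ t : ℝ, 0 ≤ t → t < a (stage t + 1) := by
    intro t ht
    by_contra h
    push_neg at h
    have hle : ((stage t + 1 : ℕ) : ℝ) ≤ t := le_trans (ha_ge _) h
    have hle2 : ((stage t + 1 : ℕ) : ℝ) ≤ (⌈t⌉₊ : ℝ) := le_trans hle (Nat.le_ceil t)
    have hle' : stage t + 1 ≤ ⌈t⌉₊ + 1 := le_trans (by exact_mod_cast hle2) (Nat.le_succ _)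
    exact Nat.findGreatest_is_greatest (P := fun s => a s ≤ t) (lt_add_one _) hle' h
  have hstage_eq : ∀ (s : ℕ) (t : ℝ), a s ≤ t → t < a (s + 1) → stage t = s := by
    intro s t h1 h2
    have ht : 0 ≤ t := le_trans (ha_nonneg s) h1
    by_contra hne
    rcases Nat.lt_or_ge (stage t) s with h | h
    · have hss : stage t + 1 ≤ s := h
      have hc : a (stage t + 1) ≤ a s := ha_mono hss
      linarith [hstage2 t ht]
    · have hlt : s < stage t := lt_of_le_of_ne h (Ne.symm hne)
      have hss : s + 1 ≤ stage t := hlt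
      have hc : a (s + 1) ≤ a (stage t) := ha_mono hss
      linarith [hstage1 t ht]
  set x : ℝ → M := fun t => g (prev (stage t)) (P (stage t)) (v * (t - a (stage t))) with hxdef
  have hxeval : ∀ t : ℝ, x t = g (prev (stage t)) (P (stage t)) (v * (t - a (stage t))) :=
    fun _ => rfl
  -- formula on closed stage intervals
  have hdist_le : ∀ s : ℕ, dist (prev s) (P s) ≤ D := fun s => hD _ _
  have hx_formula : ∀ (s : ℕ) (t : ℝ), a s ≤ t → t ≤ a (s + 1) →
      x t = g (prev s) (P s) (v * (t - a s)) := by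
    intro s t h1 h2
    rcases lt_or_eq_of_le h2 with h2 | h2
    · rw [hxeval t, hstage_eq s t h1 h2]
    · -- t = a (s+1): both sides equal P s
      subst h2
      have hst : stage (a (s + 1)) = s + 1 := by
        refine hstage_eq (s + 1) _ le_rfl ?_
        linarith [ha_step (s + 1), hτ.le]
      have hrhs : g (prev s) (P s) (v * (a (s + 1) - a s)) = P s := by
        apply hg_right
        refine le_trans (hdist_le s) ?_
        rw [← hvτ]
        have : τ ≤ a (s + 1) - a s := by linarith [ha_step s]
        nlinarith [hv.le]
      have hlhs : x (a (s + 1)) = prev (s + 1) := by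
        rw [hxeval, hst]
        apply hg_left; simp
      rw [hlhs, hrhs, hprevdef]
      simp
  have hx_sit : ∀ (s : ℕ) (t : ℝ), a s + τ ≤ t → t ≤ a (s + 1) → x t = P s := by
    intro s t h1 h2
    rw [hx_formula s t (by linarith [hτ.le]) h2]
    apply hg_right
    refine le_trans (hdist_le s) ?_
    rw [← hvτ]
    nlinarith [hv.le]
  have hx_lipstage : ∀ (s : ℕ) (t t' : ℝ), a s ≤ t → t ≤ t' → t' ≤ a (s + 1) →
      dist (x t) (x t') ≤ v * (t' - t) := by
    intro s t t' h1 h2 h3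
    rw [hx_formula s t h1 (le_trans h2 h3), hx_formula s t' (le_trans h1 h2) h3]
    refine le_trans (hg_lip _ _ _ _) ?_
    rw [show v * (t - a s) - v * (t' - a s) = -(v * (t' - t)) by ring, abs_neg,
      abs_of_nonneg (by nlinarith [hv.le])]
  have hx_lip : ∀ t t' : ℝ, 0 ≤ t → t ≤ t' → dist (x t) (x t') ≤ v * (t' - t) := by
    have key : ∀ n : ℕ, ∀ t t' : ℝ, 0 ≤ t → t ≤ t' → t' ≤ a n →
        dist (x t) (x t') ≤ v * (t' - t) := by
      intro n
      induction n with
      | zero =>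
        intro t t' h0 h1 h2
        rw [ha0] at h2
        have : t = t' := le_antisymm h1 (by linarith)
        subst this
        simp
      | succ n ih =>
        intro t t' h0 h1 h2
        rcases le_or_gt t' (a n) with h | h
        · exact ih t t' h0 h1 h
        · rcases le_or_gt (a n) t with h' | h'
          · exact hx_lipstage n t t' h' h1 h2
          · calc dist (x t) (x t') ≤ dist (x t) (x (a n)) + dist (x (a n)) (x t') :=
                  dist_triangle _ _ _
              _ ≤ v * (a n - t) + v * (t' - a n) :=
                  add_le_add (ih t (a n) h0 h'.le le_rfl)
                    (hx_lipstage n (a n) t' le_rfl h.le h2)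
              _ = v * (t' - t) := by ring
    intro t t' h0 h1
    exact key ⌈t'⌉₊ t t' h0 h1 (le_trans (Nat.le_ceil t') (ha_ge _))
  -- every trajectory is caught by x at some nonnegative time
  have hcatch : ∀ k : Y, ∃ t : ℝ, 0 ≤ t ∧ dist (Φ (k, t)) (x t) < ε := by
    intro k
    obtain ⟨p, r, hr0, hrε, hliminf⟩ := hGRC k
    obtain ⟨c, hc0, hc1⟩ := exists_between hliminf
    have hbdd : IsBoundedUnder (· ≥ ·) atTop
        (fun T : ℝ => (volume {t ∈ Set.Icc (0 : ℝ) T | dist (Φ (k, t)) p < r}).toReal / T) := by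
      refine ⟨0, ?_⟩
      rw [Filter.eventually_map]
      filter_upwards [eventually_ge_atTop (1 : ℝ)] with T hT
      exact div_nonneg ENNReal.toReal_nonneg (by linarith)
    have hev := eventually_lt_of_lt_liminf hc1 hbdd
    obtain ⟨T0, hT0⟩ := eventually_atTop.1 hev
    -- q j close to p
    obtain ⟨j, hj⟩ := Metric.denseRange_iff.1 hq p (ε - r) (by linarith)
    set l : ℕ := ⌈1 / c⌉₊ with hldef
    have hl : 1 / c < (l : ℝ) + 1 := lt_of_le_of_lt (Nat.le_ceil _) (by push_cast; linarith)
    have hcl : 1 < c * ((l : ℝ) + 1) := by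
      rw [div_lt_iff₀ hc0] at hl
      linarith [mul_comm c ((l : ℝ) + 1) ▸ hl]
    set m : ℕ := ⌈max T0 0⌉₊ with hmdef
    set s : ℕ := Nat.pair (Nat.pair j l) m with hsdef
    have hes : e s = (j, l) := he j l m
    have hsm : (m : ℕ) ≤ s := Nat.right_le_pair _ _
    set T : ℝ := a (s + 1) with hTdef
    have hT_ge : T0 ≤ T := by
      have h1 : T0 ≤ max T0 0 := le_max_left _ _
      have h2 : (max T0 0 : ℝ) ≤ m := Nat.le_ceil _
      have h3 : (m : ℝ) ≤ (s : ℝ) := by exact_mod_cast hsm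
      have h4 : (s : ℝ) ≤ a s := ha_ge s
      have h5 : a s ≤ T := by rw [hTdef]; linarith [ha_step s, hτ.le]
      linarith
    have hTpos : 0 < T := by
      rw [hTdef]; linarith [ha_step s, ha_nonneg s, hτ]
    have hcT := hT0 T hT_ge
    have hvol : c * T < (volume {t ∈ Set.Icc (0 : ℝ) T | dist (Φ (k, t)) p < r}).toReal := by
      rw [lt_div_iff₀ hTpos] at hcT
      exact hcT
    have hA : a s + τ < c * T := by
      have hTe : T = ((l : ℝ) + 1) * (a s + τ) + 1 := by
        rw [hTdef, haS, hes]
      have hτa : 0 < a s + τ := by linarith [ha_nonneg s, hτ]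
      rw [hTe]
      nlinarith
    -- there is a good time in (a s + τ, T]
    have hex : ∃ t : ℝ, (a s + τ < t ∧ t ≤ T) ∧ t ∈ Set.Icc (0 : ℝ) T ∧
        dist (Φ (k, t)) p < r := by
      by_contra hcon
      push_neg at hcon
      have hsub : {t ∈ Set.Icc (0 : ℝ) T | dist (Φ (k, t)) p < r} ⊆
          Set.Icc 0 (a s + τ) := by
        rintro t ⟨⟨ht0, htT⟩, htd⟩
        refine ⟨ht0, ?_⟩
        by_contra hgt
        push_neg at hgt
        exact absurd htd (not_lt.2 (hcon t ⟨hgt, htT⟩ ⟨ht0, htT⟩))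
      have hle := measure_mono (μ := (volume : Measure ℝ)) hsub
      rw [Real.volume_Icc] at hle
      have hfin : (volume {t ∈ Set.Icc (0 : ℝ) T | dist (Φ (k, t)) p < r}) ≠ ⊤ :=
        ne_top_of_le_ne_top ENNReal.ofReal_ne_top hle
      have := ENNReal.toReal_le_toReal hfin ENNReal.ofReal_ne_top |>.2 hle
      rw [ENNReal.toReal_ofReal (by linarith [ha_nonneg s, hτ.le])] at this
      linarith
    obtain ⟨t, ⟨ht1, ht2⟩, htmem, htdist⟩ := hex
    have hxt : x t = q j := by
      rw [hx_sit s t ht1.le ht2]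
      simp only [hPdef, hes]
    refine ⟨t, htmem.1, ?_⟩
    calc dist (Φ (k, t)) (x t) ≤ dist (Φ (k, t)) p + dist p (x t) := dist_triangle _ _ _
      _ < r + (ε - r) := by
          refine add_lt_add htdist ?_
          rw [hxt]
          exact hj
      _ = ε := by ring
  -- compactness of Y: finitely many catching times suffice
  choose tk htk0 htkε using hcatch
  set U : Y → Set Y := fun k => {k' | dist (Φ (k', tk k)) (x (tk k)) < ε} with hUdef
  have hUopen : ∀ k, IsOpen (U k) := by
    intro k
    have hc : Continuous fun k' : Y => Φ (k', tk k) := by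
      rw [← continuousOn_univ]
      exact hΦ.comp (Continuous.continuousOn (continuous_id.prodMk continuous_const))
        (fun k' _ => ⟨trivial, htk0 k⟩)
    exact isOpen_lt (hc.dist continuous_const) continuous_const
  obtain ⟨I, hI⟩ := isCompact_univ.elim_finite_subcover U hUopen
    (fun k _ => Set.mem_iUnion.2 ⟨k, htkε k⟩)
  set T : ℝ := 1 + ∑ i ∈ I, tk i with hTdef
  have hsum_nonneg : ∀ i ∈ I, 0 ≤ tk i := fun i _ => htk0 i
  have hTpos : 0 < T := by
    rw [hTdef]
    have : 0 ≤ ∑ i ∈ I, tk i := Finset.sum_nonneg hsum_nonneg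
    linarith
  have htk_le : ∀ i ∈ I, tk i ≤ T := by
    intro i hi
    have := Finset.single_le_sum hsum_nonneg hi
    rw [hTdef]; linarith
  refine ⟨T, hTpos, x, ?_, ?_⟩
  · intro s hs t ht
    rcases le_total s t with h | h
    · have h2 := hx_lip s t hs.1 h
      rw [abs_of_nonpos (show s - t ≤ (0 : ℝ) by linarith), neg_sub]
      exact h2
    · have h2 := hx_lip t s ht.1 h
      rw [abs_of_nonneg (show (0 : ℝ) ≤ s - t by linarith)]
      rwa [dist_comm (x t) (x s)] at h2
  · intro k
    obtain ⟨i, hiI, hki⟩ := Set.mem_iUnion₂.1 (hI (Set.mem_univ k))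
    exact ⟨tk i, ⟨htk0 i, htk_le i hiI⟩, hki⟩
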